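/- arXiv:1811.10834 — 4 statements merged into one kernel-verified Lean document; each statement's English description precedes it below -/
import Mathlib

section
/- For real numbers $a, b$ with $0 < a$ and $b > 2a$, the integral $\int_0^{\infty} \frac{(\kappa_q(a) - \kappa_q(b))^2}{q}\, dq \le 2(a-b)^2$, where for $q > 0$, $\kappa_q(y) := \min(q, \max(q/2, y))$. -/
/-!
Both `κ_q(a)` and `κ_q(b)` lie in `[q/2, q]`, so the integrand is at most `q/4`; it vanishes
for `q ≤ a` (both values are `q`) and for `q ≥ 2b` (both are `q/2`). Hence the integral is at
most `∫_a^{2b} q/4 dq ≤ b²/2`, and `b²/2 ≤ 2(a-b)²` because `b - a > b/2`.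
-/

open MeasureTheory

/-- The clamping function `κ_q(y) = min(q, max(q/2, y))`. -/
noncomputable def kappa (q y : ℝ) : ℝ := min q (max (q / 2) y)

section Kappa

variable {q y : ℝ}

lemma kappa_of_le (hq : 0 < q) (h : q ≤ y) : kappa q y = q := by
  rw [kappa, max_eq_right (by linarith), min_eq_left h]

lemma kappa_of_le_half (hq : 0 < q) (h : y ≤ q / 2) : kappa q y = q / 2 := by
  rw [kappa, max_eq_left h, min_eq_right (by linarith)]

lemma kappa_le (q y : ℝ) : kappa q y ≤ q := min_le_left _ _

lemma half_le_kappa (y : ℝ) (hq : 0 ≤ q) : q / 2 ≤ kappa q y :=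
  le_min (by linarith) (le_max_left _ _)

lemma kappa_sub_kappa_sq_le (y z : ℝ) (hq : 0 ≤ q) : (kappa q y - kappa q z) ^ 2 ≤ (q / 2) ^ 2 := by
  have := kappa_le q y
  have := kappa_le q z
  have := half_le_kappa y hq
  have := half_le_kappa z hq
  exact sq_le_sq' (by linarith) (by linarith)

lemma kappa_sub_kappa_sq_div_le_indicator {a b : ℝ} (hab : a ≤ b) (hq : 0 < q) :
    (kappa q a - kappa q b) ^ 2 / q ≤ (Set.Ioo a (2 * b)).indicator (fun x => x / 4) q := by
  by_cases hmem : q ∈ Set.Ioo a (2 * b)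
  · rw [Set.indicator_of_mem hmem, div_le_iff₀ hq]
    nlinarith [kappa_sub_kappa_sq_le a b hq.le]
  have hkappa : kappa q a = kappa q b := by
    rcases not_and_or.mp hmem with hqa | hqb
    · rw [kappa_of_le hq (not_lt.mp hqa), kappa_of_le hq (by linarith [not_lt.mp hqa])]
    · rw [kappa_of_le_half hq (by linarith [not_lt.mp hqb]),
        kappa_of_le_half hq (by linarith [not_lt.mp hqb])]
  simp [hkappa, Set.indicator_of_notMem hmem]

end Kappa

section IndicatorIntegral

variable {a c : ℝ}

lemma integrableOn_Ioi_indicator_Ioo_div_four :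
    IntegrableOn ((Set.Ioo a c).indicator (fun x : ℝ => x / 4)) (Set.Ioi 0) :=
  Integrable.restrict <| (integrable_indicator_iff measurableSet_Ioo).mpr <|
    (continuous_id.div_const 4).integrableOn_Icc.mono_set Set.Ioo_subset_Icc_self

lemma setIntegral_Ioi_indicator_Ioo_div_four (ha : 0 ≤ a) (hac : a ≤ c) :
    ∫ x in Set.Ioi 0, (Set.Ioo a c).indicator (fun x : ℝ => x / 4) x = (c ^ 2 - a ^ 2) / 8 := by
  have hsub : Set.Ioo a c ⊆ Set.Ioi 0 := fun x hx => ha.trans_lt hx.1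
  rw [integral_indicator measurableSet_Ioo, Measure.restrict_restrict measurableSet_Ioo,
    Set.inter_eq_left.mpr hsub, ← integral_Ioc_eq_integral_Ioo,
    ← intervalIntegral.integral_of_le hac, intervalIntegral.integral_div, integral_id]
  ring

end IndicatorIntegral

theorem kappa_integral_case_far (a b : ℝ) (ha : 0 < a) (hb : 2 * a < b) :
    (∫ q in Set.Ioi (0 : ℝ), (kappa q a - kappa q b) ^ 2 / q) ≤ 2 * (a - b) ^ 2 := by
  calc (∫ q in Set.Ioi (0 : ℝ), (kappa q a - kappa q b) ^ 2 / q)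
      ≤ ∫ q in Set.Ioi (0 : ℝ), (Set.Ioo a (2 * b)).indicator (fun x => x / 4) q := by
        refine integral_mono_of_nonneg ?_ integrableOn_Ioi_indicator_Ioo_div_four ?_
        · filter_upwards [ae_restrict_mem measurableSet_Ioi] with q hq
          exact div_nonneg (sq_nonneg _) (le_of_lt hq)
        · filter_upwards [ae_restrict_mem measurableSet_Ioi] with q hq
          exact kappa_sub_kappa_sq_div_le_indicator (by linarith) hq
    _ = ((2 * b) ^ 2 - a ^ 2) / 8 := setIntegral_Ioi_indicator_Ioo_div_four ha.le (by linarith)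
    _ ≤ 2 * (a - b) ^ 2 := by nlinarith
end

section
/- For all real numbers $a, b$, $\int_0^{\infty} \frac{(\kappa_q(a) - \kappa_q(b))^2}{q}\, dq \le 10(a-b)^2$, where for $q > 0$, $\kappa_q(y) := \min(q, \max(q/2, y))$. -/
open MeasureTheory

lemma kappa_mem (q y : ℝ) (hq : 0 < q) : q / 2 ≤ kappa q y ∧ kappa q y ≤ q :=
  ⟨le_min (by linarith) (le_max_left _ _), min_le_left _ _⟩

lemma kappa_lip (q a b : ℝ) : |kappa q a - kappa q b| ≤ |a - b| := by
  unfold kappa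
  refine (abs_min_sub_min_le_max q (max (q/2) a) q (max (q/2) b)).trans ?_
  simp only [sub_self, abs_zero]
  refine max_le (abs_nonneg _) ?_
  simpa using abs_max_sub_max_le_max (q/2) a (q/2) b

lemma kappa_aux (a b : ℝ) (hba : b ≤ a) :
    (∫ q in Set.Ioi (0 : ℝ), (kappa q a - kappa q b) ^ 2 / q) ≤ 10 * (a - b) ^ 2 := by
  rcases le_or_gt a 0 with ha | ha
  · have h0 : ∀ q ∈ Set.Ioi (0:ℝ), (kappa q a - kappa q b) ^ 2 / q = 0 := by
      intro q hq
      simp only [Set.mem_Ioi] at hq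
      have h1 : kappa q a = q / 2 := by
        unfold kappa; rw [max_eq_left (by linarith), min_eq_right (by linarith)]
      have h2 : kappa q b = q / 2 := by
        unfold kappa; rw [max_eq_left (by linarith), min_eq_right (by linarith)]
      rw [h1, h2]; ring
    rw [setIntegral_congr_fun measurableSet_Ioi h0]
    simp only [integral_zero]
    positivity
  · set d : ℝ := a - b with hd
    have hd0 : 0 ≤ d := by simp only [hd]; linarith
    set m : ℝ := max (2 * d) b with hm
    have hm2d : 2 * d ≤ m := le_max_left _ _
    have hmb : b ≤ m := le_max_right _ _
    have hm0 : 0 < m := by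
      rcases le_or_gt b 0 with hb | hb
      · have hdpos : 0 < d := by simp only [hd]; linarith
        linarith
      · linarith
    have hab : a = b + d := by simp only [hd]; ring
    have h2a3m : 2 * a ≤ 3 * m := by
      rcases le_total b (2 * d) with h | h <;> nlinarith
    set g : ℝ → ℝ := fun q =>
      (Set.Ioc (0:ℝ) (2*d)).indicator (fun q => q / 4) q +
      (Set.Ioc m (2*a)).indicator (fun q => d ^ 2 / q) q with hgdef
    have hg1 : Integrable ((Set.Ioc (0:ℝ) (2*d)).indicator (fun q => q / 4)) :=
      (Continuous.integrableOn_Ioc (continuous_id.div_const 4)).integrable_indicator measurableSet_Ioc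
    have hg2 : Integrable ((Set.Ioc m (2*a)).indicator (fun q => d ^ 2 / q)) := by
      refine (IntegrableOn.mono_set ?_ Set.Ioc_subset_Icc_self).integrable_indicator
        measurableSet_Ioc
      apply ContinuousOn.integrableOn_compact isCompact_Icc
      apply ContinuousOn.div continuousOn_const continuousOn_id
      intro x hx
      have h1 := hx.1
      simp only [id_eq]
      intro h; rw [h] at h1; linarith
    have hgint : Integrable g := hg1.add hg2
    have hle : (∫ q in Set.Ioi (0 : ℝ), (kappa q a - kappa q b) ^ 2 / q) ≤
        ∫ q in Set.Ioi (0 : ℝ), g q := by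
      apply integral_mono_of_nonneg
      · filter_upwards [ae_restrict_mem measurableSet_Ioi] with q hq
        simp only [Set.mem_Ioi] at hq
        positivity
      · exact hgint.restrict
      · filter_upwards [ae_restrict_mem measurableSet_Ioi] with q hq
        simp only [Set.mem_Ioi] at hq
        obtain ⟨hka1, hka2⟩ := kappa_mem q a hq
        obtain ⟨hkb1, hkb2⟩ := kappa_mem q b hq
        have habs : |kappa q a - kappa q b| ≤ d := by
          have h := kappa_lip q a b
          rwa [abs_of_nonneg (by linarith : (0:ℝ) ≤ a - b)] at h
        have hsqd : (kappa q a - kappa q b) ^ 2 ≤ d ^ 2 := by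
          nlinarith [abs_nonneg (kappa q a - kappa q b), sq_abs (kappa q a - kappa q b)]
        have hind2 : 0 ≤ (Set.Ioc m (2*a)).indicator (fun q => d ^ 2 / q) q := by
          apply Set.indicator_nonneg
          intro x hx
          have hx0 : 0 < x := lt_trans hm0 hx.1
          positivity
        have hind1 : 0 ≤ (Set.Ioc (0:ℝ) (2*d)).indicator (fun q => q / 4) q := by
          apply Set.indicator_nonneg
          intro x hx
          have := hx.1
          linarith
        rcases le_or_gt q (2*d) with hq2 | hq2
        · have h1 : (Set.Ioc (0:ℝ) (2*d)).indicator (fun q => q / 4) q = q / 4 :=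
            Set.indicator_of_mem (Set.mem_Ioc.mpr ⟨hq, hq2⟩) _
          have hfq : (kappa q a - kappa q b) ^ 2 / q ≤ q / 4 := by
            rw [div_le_iff₀ hq]
            have h3 : |kappa q a - kappa q b| ≤ q / 2 := by
              rw [abs_le]
              constructor <;> linarith
            nlinarith [abs_nonneg (kappa q a - kappa q b), sq_abs (kappa q a - kappa q b)]
          simp only [hgdef, h1]
          linarith
        · rcases le_or_gt (2*a) q with hq3 | hq3
          · have h1 : kappa q a = q / 2 := by
              unfold kappa; rw [max_eq_left (by linarith), min_eq_right (by linarith)]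
            have h2 : kappa q b = q / 2 := by
              unfold kappa; rw [max_eq_left (by linarith), min_eq_right (by linarith)]
            simp only [hgdef, h1, h2, sub_self]
            rw [zero_pow (by norm_num), zero_div]
            linarith
          · rcases le_or_gt q b with hq4 | hq4
            · have h1 : kappa q a = q := by
                unfold kappa; rw [min_eq_left (le_max_of_le_right (by linarith))]
              have h2 : kappa q b = q := by
                unfold kappa; rw [min_eq_left (le_max_of_le_right hq4)]
              simp only [hgdef, h1, h2, sub_self]
              rw [zero_pow (by norm_num), zero_div]
              linarith
            · have hmem : q ∈ Set.Ioc m (2*a) := by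
                constructor
                · rw [hm, max_lt_iff]; exact ⟨hq2, hq4⟩
                · linarith
              have h1 : (Set.Ioc m (2*a)).indicator (fun q => d ^ 2 / q) q = d ^ 2 / q :=
                Set.indicator_of_mem hmem _
              have hfq : (kappa q a - kappa q b) ^ 2 / q ≤ d ^ 2 / q := by
                exact div_le_div_of_nonneg_right hsqd hq.le
              simp only [hgdef, h1]
              linarith
    refine hle.trans ?_
    rw [integral_add hg1.restrict hg2.restrict]
    have hI1 : (∫ q in Set.Ioi (0:ℝ),
        (Set.Ioc (0:ℝ) (2*d)).indicator (fun q => q / 4) q) = d ^ 2 / 2 := by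
      rw [setIntegral_indicator measurableSet_Ioc]
      have hinter : Set.Ioi (0:ℝ) ∩ Set.Ioc (0:ℝ) (2*d) = Set.Ioc (0:ℝ) (2*d) :=
        Set.inter_eq_self_of_subset_right Set.Ioc_subset_Ioi_self
      rw [hinter, ← intervalIntegral.integral_of_le (by linarith)]
      rw [intervalIntegral.integral_div, integral_id]
      ring
    have hI2 : (∫ q in Set.Ioi (0:ℝ),
        (Set.Ioc m (2*a)).indicator (fun q => d ^ 2 / q) q) ≤ 2 * d ^ 2 := by
      rw [setIntegral_indicator measurableSet_Ioc]
      have hinter : Set.Ioi (0:ℝ) ∩ Set.Ioc m (2*a) = Set.Ioc m (2*a) := by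
        apply Set.inter_eq_self_of_subset_right
        intro x hx
        exact lt_trans hm0 hx.1
      rw [hinter]
      rcases le_or_gt (2*a) m with hcase | hcase
      · rw [Set.Ioc_eq_empty (by linarith), Measure.restrict_empty, integral_zero_measure]
        positivity
      · rw [← intervalIntegral.integral_of_le (le_of_lt hcase)]
        have heq : ∀ q : ℝ, d ^ 2 / q = d ^ 2 * (1 / q) := fun q => by ring
        simp_rw [heq]
        rw [intervalIntegral.integral_const_mul, integral_one_div]
        · have hlog : Real.log (2 * a / m) ≤ 2 := by
            refine (Real.log_le_sub_one_of_pos (by positivity)).trans ?_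
            have : 2 * a / m ≤ 3 := by
              rw [div_le_iff₀ hm0]; linarith
            linarith
          nlinarith [sq_nonneg d]
        · intro h
          rw [Set.mem_uIcc] at h
          rcases h with ⟨h1, _⟩ | ⟨_, h2⟩ <;> linarith
    have hd2 : (a - b) ^ 2 = d ^ 2 := by rw [hd]
    rw [hI1, hd2]
    refine le_trans (add_le_add_right hI2 _) ?_
    nlinarith [sq_nonneg d]

theorem kappa_integral_bound (a b : ℝ) :
    (∫ q in Set.Ioi (0 : ℝ), (kappa q a - kappa q b) ^ 2 / q) ≤ 10 * (a - b) ^ 2 := by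
  rcases le_total b a with h | h
  · exact kappa_aux a b h
  · have heq : ∀ q ∈ Set.Ioi (0:ℝ), (kappa q a - kappa q b) ^ 2 / q =
        (kappa q b - kappa q a) ^ 2 / q := by
      intro q _; ring_nf
    rw [setIntegral_congr_fun measurableSet_Ioi heq]
    calc (∫ q in Set.Ioi (0 : ℝ), (kappa q b - kappa q a) ^ 2 / q) ≤ 10 * (b - a) ^ 2 :=
          kappa_aux b a h
      _ = 10 * (a - b) ^ 2 := by ring
end

section
/- Let $L$ be the Laplacian of a connected weighted graph on vertex set $V$, let $S \subseteq V$, and let $L_S$ denote the Schur complement of $L$ onto $S$. Then for any vector $x \in \mathbb{R}^V$ supported on $S$ with $x^T \mathbf{1} = 0$, we have $x^T L^{\dagger} x = x_S^T L_S^{\dagger} x_S$, where $x_S$ is the restriction of $x$ to coordinates in $S$ and $\dagger$ denotes the Moore–Penrose pseudoinverse. -/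
open Matrix MeasureTheory
open scoped Classical

/-- The (weighted) Laplacian matrix of the weighted graph on `V` with weights `c`. -/
noncomputable def lapl {V : Type*} [Fintype V] [DecidableEq V] (c : V → V → ℝ) :
    Matrix V V ℝ :=
  fun u v => if u = v then ∑ w, c u w else -c u v

/-- The graph described by `L` is connected: the kernel of `L` consists of constants. -/
def LapConnected {V : Type*} [Fintype V] (L : Matrix V V ℝ) : Prop :=
  ∀ x : V → ℝ, L *ᵥ x = 0 → ∃ k : ℝ, ∀ v, x v = k

/-- The Schur complement of `L` onto the rows and columns indexed by `S`,
eliminating the vertices outside of `S`. -/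
noncomputable def schur {V : Type*} [Fintype V] [DecidableEq V]
    (L : Matrix V V ℝ) (S : Set V) : Matrix S S ℝ :=
  (Matrix.of fun i j : S => L i.1 j.1)
    - (Matrix.of fun (i : S) (j : {v : V // v ∉ S}) => L i.1 j.1)
        * (Matrix.of fun i j : {v : V // v ∉ S} => L i.1 j.1)⁻¹
        * (Matrix.of fun (i : {v : V // v ∉ S}) (j : S) => L i.1 j.1)

/-- `B` is the Moore–Penrose pseudoinverse of `A`. -/
def IsMPInv {n : Type*} [Fintype n] (A B : Matrix n n ℝ) : Prop :=
  A * B * A = A ∧ B * A * B = B ∧ (A * B)ᵀ = A * B ∧ (B * A)ᵀ = B * A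

/-!
Put `y = L⁺ x`. Since `L` is symmetric with kernel the constants, `x ⟂ 1` lies in its range and
`L y = x`. As `x` vanishes off `S`, the rows of `L y = x` outside `S` let one eliminate the
coordinates of `y` outside `S` (the block of `L` there is invertible because `L` is positive
semidefinite with kernel the constants), which leaves `L_S y_S = x_S`. For a symmetric matrix `A`
and any solution of `A y = b` one has `bᵀ A⁺ b = yᵀ A A⁺ A y = yᵀ b`; applied to `L` and to `L_S`
this gives `xᵀ L⁺ x = yᵀ x = y_Sᵀ x_S = x_Sᵀ L_S⁺ x_S`.
-/

theorem eq_zero_of_forall_eq_of_sum_eq_zero {n : Type*} [Fintype n] {z : n → ℝ} {k : ℝ}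
    (hk : ∀ i, z i = k) (hz : ∑ i, z i = 0) : z = 0 := by
  funext i
  have hcard : (Fintype.card n : ℝ) ≠ 0 :=
    Nat.cast_ne_zero.2 (Fintype.card_pos_iff.2 ⟨i⟩).ne'
  simp only [hk, Finset.sum_const, Finset.card_univ, nsmul_eq_mul, mul_eq_zero, hcard,
    false_or] at hz
  rw [hk, hz, Pi.zero_apply]

theorem dotProduct_eq_dotProduct_restrict_of_eq_zero_off {V : Type*} [Fintype V] {S : Set V}
    {x : V → ℝ} (hx : ∀ v, v ∉ S → x v = 0) (y : V → ℝ) :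
    x ⬝ᵥ y = (fun i : S => x i) ⬝ᵥ (fun i : S => y i) := by
  have hoff : ∑ j : {v // v ∉ S}, x j * y j = 0 :=
    Finset.sum_eq_zero fun j _ => by rw [hx j j.2, zero_mul]
  rw [dotProduct, ← Fintype.sum_subtype_add_sum_subtype (· ∈ S), hoff, add_zero]
  rfl

namespace IsMPInv

variable {n : Type*} [Fintype n] {A P : Matrix n n ℝ}

theorem mul_mul_self_of_transpose_eq (hA : Aᵀ = A) (h : IsMPInv A P) : A * A * P = A :=
  calc A * A * P = Aᵀ * (A * P)ᵀ := by rw [hA, h.2.2.1, Matrix.mul_assoc]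
    _ = (A * P * A)ᵀ := (transpose_mul _ _).symm
    _ = A := by rw [h.1, hA]

theorem dotProduct_mulVec_of_mulVec_eq (hA : Aᵀ = A) (h : IsMPInv A P) {y b : n → ℝ}
    (hy : A *ᵥ y = b) : b ⬝ᵥ (P *ᵥ b) = y ⬝ᵥ b := by
  subst hy
  rw [dotProduct_comm, dotProduct_mulVec, ← mulVec_transpose, hA, dotProduct_comm,
    mulVec_mulVec, mulVec_mulVec, h.1]

theorem mulVec_mulVec_of_sum_eq_zero (hA : Aᵀ = A) (h : IsMPInv A P) (hone : A *ᵥ 1 = 0)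
    (hker : LapConnected A) {b : n → ℝ} (hb : ∑ i, b i = 0) : A *ᵥ (P *ᵥ b) = b := by
  have hAz : A *ᵥ (b - A *ᵥ (P *ᵥ b)) = 0 := by
    rw [mulVec_sub, mulVec_mulVec, mulVec_mulVec, h.mul_mul_self_of_transpose_eq hA, sub_self]
  have hAsum : ∑ i, (A *ᵥ (P *ᵥ b)) i = 0 := by
    rw [← one_dotProduct, dotProduct_mulVec, ← mulVec_transpose, hA, hone, zero_dotProduct]
  obtain ⟨k, hk⟩ := hker _ hAz
  have hsum : ∑ i, (b - A *ᵥ (P *ᵥ b)) i = 0 := by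
    simp only [Pi.sub_apply, Finset.sum_sub_distrib, hb, hAsum, sub_zero]
  exact (sub_eq_zero.1 (eq_zero_of_forall_eq_of_sum_eq_zero hk hsum)).symm

end IsMPInv

section Laplacian

variable {V : Type*} [Fintype V] [DecidableEq V] {c : V → V → ℝ}

theorem lapl_transpose (hsymm : ∀ u v, c u v = c v u) : (lapl c)ᵀ = lapl c := by
  ext u v
  by_cases huv : u = v
  · simp [lapl, huv]
  · simp [lapl, huv, Ne.symm huv, hsymm u v]

theorem lapl_mulVec_apply (hdiag : ∀ v, c v v = 0) (x : V → ℝ) (u : V) :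
    (lapl c *ᵥ x) u = ∑ v, c u v * (x u - x v) := by
  have hterm : ∀ v,
      lapl c u v * x v = (if u = v then (∑ w, c u w) * x u else 0) - c u v * x v :=
    fun v => by by_cases huv : u = v <;> simp [lapl, huv, hdiag]
  simp only [mulVec, dotProduct, hterm, Finset.sum_sub_distrib, Finset.sum_ite_eq,
    Finset.mem_univ, if_true, Finset.sum_mul, mul_sub]

theorem lapl_mulVec_one (hdiag : ∀ v, c v v = 0) : lapl c *ᵥ 1 = 0 := by
  funext u
  simp [lapl_mulVec_apply hdiag]

theorem two_mul_dotProduct_lapl_mulVec (hsymm : ∀ u v, c u v = c v u)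
    (hdiag : ∀ v, c v v = 0) (x : V → ℝ) :
    2 * (x ⬝ᵥ (lapl c *ᵥ x)) = ∑ u, ∑ v, c u v * (x u - x v) ^ 2 := by
  have hswap : ∑ u, ∑ v, c u v * (x u * (x u - x v))
      = ∑ u, ∑ v, c u v * (x v * (x v - x u)) := by
    rw [Finset.sum_comm]
    simp only [hsymm]
  have hform : x ⬝ᵥ (lapl c *ᵥ x) = ∑ u, ∑ v, c u v * (x u * (x u - x v)) := by
    simp only [dotProduct, lapl_mulVec_apply hdiag, Finset.mul_sum]
    exact Finset.sum_congr rfl fun u _ => Finset.sum_congr rfl fun v _ => by ring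
  rw [two_mul]
  nth_rewrite 1 [hform]
  rw [hform.trans hswap, ← Finset.sum_add_distrib]
  refine Finset.sum_congr rfl fun u _ => ?_
  rw [← Finset.sum_add_distrib]
  exact Finset.sum_congr rfl fun v _ => by ring

theorem lapl_posSemidef (hsymm : ∀ u v, c u v = c v u) (hnonneg : ∀ u v, 0 ≤ c u v)
    (hdiag : ∀ v, c v v = 0) : (lapl c).PosSemidef := by
  refine .of_dotProduct_mulVec_nonneg (lapl_transpose hsymm) fun x => ?_
  have h2 := two_mul_dotProduct_lapl_mulVec hsymm hdiag x
  have : 0 ≤ ∑ u, ∑ v, c u v * (x u - x v) ^ 2 := Finset.sum_nonneg fun u _ =>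
    Finset.sum_nonneg fun v _ => mul_nonneg (hnonneg u v) (sq_nonneg _)
  rw [star_trivial]
  linarith

end Laplacian

section Schur

variable {V : Type*} [Fintype V] [DecidableEq V] {L : Matrix V V ℝ} {S : Set V}

omit [DecidableEq V] in
theorem submatrix_mulVec_add_submatrix_mulVec (L : Matrix V V ℝ) (S : Set V) {ι : Type*}
    (r : ι → V) (v : V → ℝ) :
    L.submatrix r ((↑) : S → V) *ᵥ (fun i : S => v i)
      + L.submatrix r ((↑) : {w // w ∉ S} → V) *ᵥ (fun j => v j) = fun i => (L *ᵥ v) (r i) :=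
  funext fun i => Fintype.sum_subtype_add_sum_subtype (· ∈ S) fun w => L (r i) w * v w

theorem schur_eq_submatrix (L : Matrix V V ℝ) (S : Set V) :
    schur L S = L.submatrix ((↑) : S → V) ((↑) : S → V)
      - L.submatrix ((↑) : S → V) ((↑) : {w // w ∉ S} → V)
        * (L.submatrix ((↑) : {w // w ∉ S} → V) ((↑) : {w // w ∉ S} → V))⁻¹
        * L.submatrix ((↑) : {w // w ∉ S} → V) ((↑) : S → V) :=
  rfl

theorem schur_transpose (hL : Lᵀ = L) : (schur L S)ᵀ = schur L S := by
  simp only [schur_eq_submatrix, transpose_sub, transpose_mul, transpose_submatrix, hL,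
    transpose_nonsing_inv, Matrix.mul_assoc]

theorem schur_mulVec_of_mulVec_eq_zero_off
    (hD : IsUnit (L.submatrix ((↑) : {w // w ∉ S} → V) ((↑) : {w // w ∉ S} → V)).det)
    (v : V → ℝ)
    (hv : ∀ j : {w // w ∉ S}, (L *ᵥ v) j = 0) :
    schur L S *ᵥ (fun i : S => v i) = fun i : S => (L *ᵥ v) i := by
  rw [schur_eq_submatrix, ← submatrix_mulVec_add_submatrix_mulVec L S ((↑) : S → V) v]
  set vS : S → ℝ := fun i => v i
  set vT : {w // w ∉ S} → ℝ := fun j => v j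
  set A := L.submatrix ((↑) : S → V) ((↑) : S → V)
  set B := L.submatrix ((↑) : S → V) ((↑) : {w // w ∉ S} → V)
  set C := L.submatrix ((↑) : {w // w ∉ S} → V) ((↑) : S → V)
  set D := L.submatrix ((↑) : {w // w ∉ S} → V) ((↑) : {w // w ∉ S} → V)
  have hDv : D *ᵥ vT = -(C *ᵥ vS) := eq_neg_of_add_eq_zero_right <|
    (submatrix_mulVec_add_submatrix_mulVec L S _ v).trans (funext hv)
  calc (A - B * D⁻¹ * C) *ᵥ vS = A *ᵥ vS + B *ᵥ (D⁻¹ *ᵥ -(C *ᵥ vS)) := by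
        rw [sub_mulVec, ← mulVec_mulVec, ← mulVec_mulVec, mulVec_neg, mulVec_neg, sub_eq_add_neg]
    _ = A *ᵥ vS + B *ᵥ vT := by rw [← hDv, mulVec_mulVec _ D⁻¹, nonsing_inv_mul _ hD, one_mulVec]

theorem det_submatrix_compl_ne_zero (hL : L.PosSemidef) (hconn : LapConnected L)
    (hS : S.Nonempty) :
    (L.submatrix ((↑) : {w // w ∉ S} → V) ((↑) : {w // w ∉ S} → V)).det ≠ 0 := by
  intro hdet
  obtain ⟨w, hw0, hDw⟩ := exists_mulVec_eq_zero_iff.2 hdet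
  set v : V → ℝ := fun u => if h : u ∈ S then 0 else w ⟨u, h⟩
  have hvS : (fun i : S => v i) = 0 := funext fun i => dif_pos i.2
  have hvT : (fun j : {u // u ∉ S} => v j) = w := funext fun j => dif_neg j.2
  have hLvT : ∀ j : {u // u ∉ S}, (L *ᵥ v) j = 0 := fun j => by
    have hblock :=
      congrFun (submatrix_mulVec_add_submatrix_mulVec L S ((↑) : {u // u ∉ S} → V) v) j
    rw [hvS, hvT, hDw, mulVec_zero, add_zero] at hblock
    exact hblock.symm
  have hLv : L *ᵥ v = 0 := by
    rw [← hL.dotProduct_mulVec_zero_iff, star_trivial]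
    refine Finset.sum_eq_zero fun u _ => ?_
    by_cases hu : u ∈ S
    · simp [v, hu]
    · rw [show (L *ᵥ v) u = 0 from hLvT ⟨u, hu⟩, mul_zero]
  obtain ⟨k, hk⟩ := hconn v hLv
  obtain ⟨s, hs⟩ := hS
  have hk0 : k = 0 := by rw [← hk s]; exact dif_pos hs
  exact hw0 (hvT ▸ funext fun j => by simp [hk, hk0])

end Schur

/-- Quadratic forms in the pseudoinverse are preserved under Schur complementation,
for vectors supported on `S` that are orthogonal to the all-ones vector. -/
theorem quadform_pinv_schur {V : Type*} [Fintype V] [DecidableEq V]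
    (c : V → V → ℝ) (hsymm : ∀ u v, c u v = c v u) (hnonneg : ∀ u v, 0 ≤ c u v)
    (hdiag : ∀ v, c v v = 0) (hconn : LapConnected (lapl c))
    (S : Set V) (hS : S.Nonempty)
    (x : V → ℝ) (hsupp : ∀ v, v ∉ S → x v = 0) (hsum : ∑ v, x v = 0)
    (M : Matrix V V ℝ) (hM : IsMPInv (lapl c) M)
    (N : Matrix S S ℝ) (hN : IsMPInv (schur (lapl c) S) N) :
    x ⬝ᵥ (M *ᵥ x) = (fun i : S => x i.1) ⬝ᵥ (N *ᵥ fun i : S => x i.1) := by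
  have hLt := lapl_transpose hsymm
  have hD := isUnit_iff_ne_zero.2
    (det_submatrix_compl_ne_zero (lapl_posSemidef hsymm hnonneg hdiag) hconn hS)
  have hy : lapl c *ᵥ (M *ᵥ x) = x :=
    hM.mulVec_mulVec_of_sum_eq_zero hLt (lapl_mulVec_one hdiag) hconn hsum
  have hyS : schur (lapl c) S *ᵥ (fun i : S => (M *ᵥ x) i) = fun i : S => x i := by
    rw [schur_mulVec_of_mulVec_eq_zero_off hD _ fun j => by rw [hy]; exact hsupp j j.2, hy]
  rw [hN.dotProduct_mulVec_of_mulVec_eq (schur_transpose hLt) hyS,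
    dotProduct_eq_dotProduct_restrict_of_eq_zero_off hsupp]
  exact dotProduct_comm _ _
end

section
/- Let $G$ be a connected weighted graph and suppose there exist disjoint nonempty sets $A, B \subseteq V(G)$ with $\phi_A^G \le 1/4$, $\phi_B^G \le 1/4$, and mixed fractional conductance $\sigma_{A,B}^G \le 640 \lambda_G$. Then the Schur complement fractional conductance satisfies $\rho_{A,B}^G \le \frac{4}{3} \sigma_{A,B}^G \le 1280 \lambda_G$. In particular, $\mathrm{vol}_I(A) \ge \frac{3}{4}\mathrm{vol}_G(A)$ and $\mathrm{vol}_I(B) \ge \frac{3}{4}\mathrm{vol}_G(B)$ where $I := \mathtt{Schur}(G, A \cup B)$. -/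
open Matrix MeasureTheory
open scoped Classical

/-- The weighted degree of `v`. -/
noncomputable def wdeg {V : Type*} [Fintype V] (c : V → V → ℝ) (v : V) : ℝ := ∑ u, c v u

/-- The smallest Rayleigh quotient of `M` over nonzero vectors orthogonal to `w`;
for a PSD matrix whose kernel is spanned by `w`, this is the smallest nonzero
eigenvalue of `M`. -/
noncomputable def rayleighMin {n : Type*} [Fintype n] (M : Matrix n n ℝ) (w : n → ℝ) : ℝ :=
  sInf {r : ℝ | ∃ x : n → ℝ, x ≠ 0 ∧ x ⬝ᵥ w = 0 ∧ r = (x ⬝ᵥ (M *ᵥ x)) / (x ⬝ᵥ x)}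

/-- The normalized Laplacian `D^{-1/2} L D^{-1/2}`. -/
noncomputable def normLapl {V : Type*} [Fintype V] [DecidableEq V] (c : V → V → ℝ) :
    Matrix V V ℝ :=
  fun u v => lapl c u v / (Real.sqrt (wdeg c u) * Real.sqrt (wdeg c v))

/-- `λ_G`, the smallest nonzero eigenvalue of the normalized Laplacian,
via its Rayleigh quotient characterization over vectors orthogonal to `D^{1/2} 1`. -/
noncomputable def lambdaG {V : Type*} [Fintype V] [DecidableEq V] (c : V → V → ℝ) : ℝ :=
  rayleighMin (normLapl c) (fun v => Real.sqrt (wdeg c v))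

section Aux
variable {V : Type*} [Fintype V] [DecidableEq V]

lemma lapl_mulVec (c : V → V → ℝ) (hdiag : ∀ v, c v v = 0) (x : V → ℝ) (u : V) :
    (lapl c *ᵥ x) u = ∑ v, c u v * (x u - x v) := by
  simp only [mulVec, dotProduct, lapl]
  have h : ∀ v : V, (if u = v then ∑ w, c u w else -c u v) * x v
      = (if u = v then (∑ w, c u w) * x u else 0) + (-(c u v * x v)) := by
    intro v
    by_cases h : u = v
    · subst h; simp [hdiag]
    · simp [h]
  rw [Finset.sum_congr rfl fun v _ => h v, Finset.sum_add_distrib,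
    Finset.sum_ite_eq Finset.univ u (fun _ => (∑ w, c u w) * x u)]
  simp only [Finset.mem_univ, if_true, ← Finset.sum_neg_distrib, ← Finset.sum_mul,
    ← Finset.sum_add_distrib]
  rw [Finset.sum_mul, ← Finset.sum_add_distrib]
  exact Finset.sum_congr rfl fun v _ => by ring

lemma lapl_quadform (c : V → V → ℝ) (hsymm : ∀ u v, c u v = c v u)
    (hdiag : ∀ v, c v v = 0) (x : V → ℝ) :
    2 * (x ⬝ᵥ (lapl c *ᵥ x)) = ∑ u, ∑ v, c u v * (x u - x v) ^ 2 := by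
  have h1 : x ⬝ᵥ (lapl c *ᵥ x) = ∑ u, ∑ v, c u v * x u * (x u - x v) := by
    simp only [dotProduct]
    refine Finset.sum_congr rfl fun u _ => ?_
    rw [lapl_mulVec c hdiag x u, Finset.mul_sum]
    exact Finset.sum_congr rfl fun v _ => by ring
  have h2 : ∑ u, ∑ v, c u v * x v * (x v - x u) = ∑ u, ∑ v, c u v * x u * (x u - x v) := by
    rw [Finset.sum_comm]
    exact Finset.sum_congr rfl fun u _ => Finset.sum_congr rfl fun v _ => by rw [hsymm]
  calc 2 * (x ⬝ᵥ (lapl c *ᵥ x))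
      = ∑ u, ∑ v, c u v * x u * (x u - x v) + ∑ u, ∑ v, c u v * x v * (x v - x u) := by
        rw [h1, h2]; ring
    _ = ∑ u, ∑ v, c u v * (x u - x v) ^ 2 := by
        rw [← Finset.sum_add_distrib]
        refine Finset.sum_congr rfl fun u _ => ?_
        rw [← Finset.sum_add_distrib]
        exact Finset.sum_congr rfl fun v _ => by ring

lemma lapl_quad_nonneg (c : V → V → ℝ) (hsymm : ∀ u v, c u v = c v u)
    (hnonneg : ∀ u v, 0 ≤ c u v) (hdiag : ∀ v, c v v = 0) (x : V → ℝ) :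
    0 ≤ x ⬝ᵥ (lapl c *ᵥ x) := by
  nlinarith [lapl_quadform c hsymm hdiag x,
    Finset.sum_nonneg (fun u (_ : u ∈ Finset.univ) =>
      Finset.sum_nonneg (fun v (_ : v ∈ Finset.univ) =>
        mul_nonneg (hnonneg u v) (sq_nonneg (x u - x v))))]

lemma lapl_quad_eq_zero (c : V → V → ℝ) (hsymm : ∀ u v, c u v = c v u)
    (hnonneg : ∀ u v, 0 ≤ c u v) (hdiag : ∀ v, c v v = 0) (x : V → ℝ)
    (h : x ⬝ᵥ (lapl c *ᵥ x) = 0) : lapl c *ᵥ x = 0 := by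
  have hq : ∑ u, ∑ v, c u v * (x u - x v) ^ 2 = 0 := by
    rw [← lapl_quadform c hsymm hdiag x, h]; ring
  have hterm : ∀ u v : V, c u v * (x u - x v) ^ 2 = 0 := by
    intro u v
    have h1 := (Finset.sum_eq_zero_iff_of_nonneg (fun u _ =>
      Finset.sum_nonneg (fun v _ => mul_nonneg (hnonneg u v) (sq_nonneg (x u - x v))))).1 hq
      u (Finset.mem_univ u)
    exact (Finset.sum_eq_zero_iff_of_nonneg (fun v _ =>
      mul_nonneg (hnonneg u v) (sq_nonneg (x u - x v)))).1 h1 v (Finset.mem_univ v)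
  funext u
  rw [lapl_mulVec c hdiag x u]
  refine Finset.sum_eq_zero fun v _ => ?_
  rcases mul_eq_zero.1 (hterm u v) with h' | h'
  · rw [h', zero_mul]
  · rw [pow_eq_zero_iff (by norm_num) |>.1 h', mul_zero]

lemma sum_subtype_pred (p : V → Prop) (f : V → ℝ) (hf : ∀ v, ¬ p v → f v = 0) :
    ∑ i : {v // p v}, f i.1 = ∑ v, f v := by
  rw [← Finset.sum_subtype (Finset.univ.filter p) (by simp) f]
  exact Finset.sum_filter_of_ne fun v _ h => by by_contra hc; exact h (hf v hc)

lemma sum_fintype_congr {α : Type*} {F1 F2 : Fintype α} (f g : α → ℝ) (h : ∀ x, f x = g x) :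
    @Finset.sum α ℝ _ (@Finset.univ α F1) f = @Finset.sum α ℝ _ (@Finset.univ α F2) g := by
  cases Subsingleton.elim F1 F2
  exact Finset.sum_congr rfl fun x _ => h x

lemma lapl_symm (c : V → V → ℝ) (hsymm : ∀ u v, c u v = c v u) (u v : V) :
    lapl c u v = lapl c v u := by
  unfold lapl
  by_cases h : u = v
  · subst h; simp
  · rw [if_neg h, if_neg (Ne.symm h), hsymm]

lemma lcc_posdef (c : V → V → ℝ) (hsymm : ∀ u v, c u v = c v u)
    (hnonneg : ∀ u v, 0 ≤ c u v) (hdiag : ∀ v, c v v = 0)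
    (hconn : LapConnected (lapl c)) (S : Set V) (hS : S.Nonempty) :
    (Matrix.of fun i j : {v : V // v ∉ S} => lapl c i.1 j.1).PosDef := by
  rw [Matrix.posDef_iff_dotProduct_mulVec]
  constructor
  · ext i j
    simp only [Matrix.conjTranspose_apply, Matrix.of_apply, star_trivial]
    exact lapl_symm c hsymm j.1 i.1
  · intro x hx
    rw [show star x = x from funext fun m => star_trivial _]
    set y : V → ℝ := fun v => if h : v ∈ S then 0 else x ⟨v, h⟩ with hydef
    have hy0 : ∀ v, v ∈ S → y v = 0 := by intro v h; simp [hydef, h]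
    have hyx : ∀ (i : {v // v ∉ S}), y i.1 = x i := by
      intro i; simp [hydef, i.2]
    have key : x ⬝ᵥ ((Matrix.of fun i j : {v : V // v ∉ S} => lapl c i.1 j.1) *ᵥ x)
        = y ⬝ᵥ (lapl c *ᵥ y) := by
      simp only [dotProduct, mulVec, Matrix.of_apply]
      rw [← sum_subtype_pred (fun v => v ∉ S) (fun u => y u * ∑ v, lapl c u v * y v)
        (fun v hv => by
          show y v * _ = 0
          rw [hy0 v (not_not.1 hv), zero_mul])]
      refine sum_fintype_congr _ _ fun i => ?_
      rw [hyx]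
      congr 1
      rw [← sum_subtype_pred (fun v => v ∉ S) (fun v => lapl c i.1 v * y v)
        (fun v hv => by
          show lapl c i.1 v * y v = 0
          rw [hy0 v (not_not.1 hv), mul_zero])]
      exact sum_fintype_congr _ _ fun j => by rw [hyx]
    rw [key]
    rcases lt_or_eq_of_le (lapl_quad_nonneg c hsymm hnonneg hdiag y) with h | h
    · exact h
    · exfalso
      obtain ⟨k, hk⟩ := hconn y (lapl_quad_eq_zero c hsymm hnonneg hdiag y h.symm)
      obtain ⟨s0, hs0⟩ := hS
      have hk0 : k = 0 := by rw [← hk s0, hy0 s0 hs0]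
      exact hx (funext fun i => by rw [← hyx i, hk i.1, hk0, Pi.zero_apply])

lemma inv_nonneg_of_posdef {n : Type*} [Fintype n] [DecidableEq n] (M : Matrix n n ℝ)
    (hpd : M.PosDef) (hoff : ∀ i j, i ≠ j → M i j ≤ 0) (k l : n) : 0 ≤ M⁻¹ k l := by
  have hdet : IsUnit M.det := (Matrix.isUnit_iff_isUnit_det M).1 hpd.isUnit
  have hmul : M * M⁻¹ = 1 := Matrix.mul_nonsing_inv M hdet
  set y : n → ℝ := fun m => M⁻¹ m l with hy
  have hNy : ∀ m, (M *ᵥ y) m = if m = l then 1 else 0 := by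
    intro m
    calc (M *ᵥ y) m = (M * M⁻¹) m l := by rw [Matrix.mul_apply]; rfl
      _ = (1 : Matrix n n ℝ) m l := by rw [hmul]
      _ = if m = l then 1 else 0 := Matrix.one_apply
  set p : n → ℝ := fun m => max (y m) 0 with hpdef
  set q : n → ℝ := fun m => max (-y m) 0 with hqdef
  have hypq : y = p - q := funext fun m => (max_zero_sub_max_neg_zero_eq_self (y m)).symm
  have hp : ∀ m, 0 ≤ p m := fun m => le_max_right _ _
  have hq : ∀ m, 0 ≤ q m := fun m => le_max_right _ _
  have hpq : ∀ m, q m * p m = 0 := by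
    intro m; rcases le_total (y m) 0 with h | h
    · rw [show p m = 0 from max_eq_right h, mul_zero]
    · rw [show q m = 0 from max_eq_right (neg_nonpos.2 h), zero_mul]
  have h1 : 0 ≤ q ⬝ᵥ (M *ᵥ y) := by
    rw [dotProduct]
    refine Finset.sum_nonneg fun m _ => ?_
    rw [hNy m]
    split
    · simpa using hq m
    · simp
  have h2 : q ⬝ᵥ (M *ᵥ p) ≤ 0 := by
    rw [dotProduct]
    refine Finset.sum_nonpos fun m _ => ?_
    show q m * (M *ᵥ p) m ≤ 0
    rw [show (M *ᵥ p) m = ∑ j, M m j * p j from rfl, Finset.mul_sum]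
    refine Finset.sum_nonpos fun j _ => ?_
    by_cases h : m = j
    · subst h
      calc q m * (M m m * p m) = M m m * (q m * p m) := by ring
        _ = 0 := by rw [hpq, mul_zero]
        _ ≤ 0 := le_refl 0
    · exact mul_nonpos_iff.mpr (Or.inl ⟨hq m,
        mul_nonpos_iff.mpr (Or.inr ⟨hoff m j h, hp j⟩)⟩)
  have h3 : q ⬝ᵥ (M *ᵥ q) ≤ 0 := by
    have hv : M *ᵥ y = M *ᵥ p - M *ᵥ q := by rw [hypq, Matrix.mulVec_sub]
    have h4 : q ⬝ᵥ (M *ᵥ y) = q ⬝ᵥ (M *ᵥ p) - q ⬝ᵥ (M *ᵥ q) := by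
      rw [hv, dotProduct_sub]
    linarith
  have hq0 : q = 0 := by
    by_contra h
    have := hpd.dotProduct_mulVec_pos h
    rw [show star q = q from funext fun m => star_trivial _] at this
    linarith
  have : 0 ≤ y k := by
    have : y k = p k := by rw [hypq]; simp [hq0]
    rw [this]; exact hp k
  exact this

lemma schur_prod_nonneg {n m : Type*} [Fintype n] [Fintype m]
    (P : Matrix n m ℝ) (Minv : Matrix m m ℝ) (Q : Matrix m n ℝ)
    (hP : ∀ i k, P i k ≤ 0) (hM : ∀ k l, 0 ≤ Minv k l) (hQ : ∀ k j, Q k j ≤ 0)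
    (i j : n) : 0 ≤ (P * Minv * Q) i j := by
  rw [Matrix.mul_apply]
  refine Finset.sum_nonneg fun k _ => ?_
  refine mul_nonneg_iff.mpr (Or.inr ⟨?_, hQ k j⟩)
  rw [Matrix.mul_apply]
  exact Finset.sum_nonpos fun l _ =>
    mul_nonpos_iff.mpr (Or.inr ⟨hP i l, hM l k⟩)

end Aux

/-- From the guarantees of `SweepCut` to the Schur complement Cheeger upper bound:
if `φ_A ≤ 1/4`, `φ_B ≤ 1/4` and `σ_{A,B} ≤ 640 λ_G`, then
`ρ_{A,B} ≤ (4/3) σ_{A,B} ≤ 1280 λ_G`, and in particular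
`vol_I(A) ≥ (3/4) vol_G(A)` and `vol_I(B) ≥ (3/4) vol_G(B)`. -/
theorem sweepcut_to_upper_bound {V : Type*} [Fintype V] [DecidableEq V]
    (c : V → V → ℝ) (hsymm : ∀ u v, c u v = c v u) (hnonneg : ∀ u v, 0 ≤ c u v)
    (hdiag : ∀ v, c v v = 0) (hconn : LapConnected (lapl c))
    (A B : Set V) (hd : Disjoint A B) (hA : A.Nonempty) (hB : B.Nonempty)
    (cI volGA volGB volIA volIB cutA cutB : ℝ)
    -- total weight of edges between `A` and `B` in `I = Schur(G, A ∪ B)`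
    (hcI : cI = ∑ i : ↥(A ∪ B), ∑ j : ↥(A ∪ B),
        if i.1 ∈ A ∧ j.1 ∈ B then -(schur (lapl c) (A ∪ B) i j) else 0)
    -- volumes in `G`
    (hvolGA : volGA = ∑ v : V, if v ∈ A then wdeg c v else 0)
    (hvolGB : volGB = ∑ v : V, if v ∈ B then wdeg c v else 0)
    -- volumes in `I = Schur(G, A ∪ B)`
    (hvolIA : volIA = ∑ i : ↥(A ∪ B), if i.1 ∈ A then
        (∑ j : ↥(A ∪ B), if j ≠ i then -(schur (lapl c) (A ∪ B) i j) else 0) else 0)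
    (hvolIB : volIB = ∑ i : ↥(A ∪ B), if i.1 ∈ B then
        (∑ j : ↥(A ∪ B), if j ≠ i then -(schur (lapl c) (A ∪ B) i j) else 0) else 0)
    -- boundary weights in `G`
    (hcutA : cutA = ∑ u : V, ∑ v : V, if u ∈ A ∧ v ∉ A then c u v else 0)
    (hcutB : cutB = ∑ u : V, ∑ v : V, if u ∈ B ∧ v ∉ B then c u v else 0)
    -- the "large interior" guarantees `φ_A ≤ 1/4` and `φ_B ≤ 1/4`
    (hphiA : cutA / min volGA (∑ v : V, if v ∉ A then wdeg c v else 0) ≤ 1 / 4)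
    (hphiB : cutB / min volGB (∑ v : V, if v ∉ B then wdeg c v else 0) ≤ 1 / 4)
    -- the "low mixed fractional conductance" guarantee `σ_{A,B} ≤ 640 λ_G`
    (hsigma : cI / min volGA volGB ≤ 640 * lambdaG c) :
    cI / min volIA volIB ≤ 4 / 3 * (cI / min volGA volGB) ∧
    4 / 3 * (cI / min volGA volGB) ≤ 1280 * lambdaG c ∧
    3 / 4 * volGA ≤ volIA ∧ 3 / 4 * volGB ≤ volIB := by
  letI : DecidablePred (· ∈ A ∪ B) := fun a => Classical.propDecidable _
  obtain ⟨a, ha⟩ := hA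
  obtain ⟨b, hb⟩ := hB
  have hbA : b ∉ A := Set.disjoint_right.1 hd hb
  have haB : a ∉ B := Set.disjoint_left.1 hd ha
  have hab : a ≠ b := fun h => haB (h ▸ hb)
  -- all weighted degrees are positive
  have hwnn : ∀ v, 0 ≤ wdeg c v := fun v => Finset.sum_nonneg fun u _ => hnonneg v u
  have hwpos : ∀ v, 0 < wdeg c v := by
    intro v
    rcases (hwnn v).lt_or_eq with h | h
    · exact h
    · exfalso
      have hcz : ∀ w, c v w = 0 := fun w =>
        (Finset.sum_eq_zero_iff_of_nonneg (fun u _ => hnonneg v u)).1 h.symm w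
          (Finset.mem_univ w)
      have hker : lapl c *ᵥ (fun u => if u = v then (1:ℝ) else 0) = 0 := by
        funext u
        rw [lapl_mulVec c hdiag _ u, Pi.zero_apply]
        refine Finset.sum_eq_zero fun w _ => ?_
        by_cases huv : u = v
        · subst huv; rw [hcz w, zero_mul]
        · by_cases hwv : w = v
          · subst hwv; rw [hsymm, hcz, zero_mul]
          · simp [huv, hwv]
      obtain ⟨k, hk⟩ := hconn _ hker
      have h1 := hk a
      have h2 := hk b
      by_cases hva : a = v
      · rw [if_pos hva] at h1
        rw [if_neg (fun h : b = v => hab (hva.trans h.symm))] at h2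
        rw [← h1] at h2; norm_num at h2
      · by_cases hvb : b = v
        · rw [if_pos hvb] at h2
          rw [if_neg hva] at h1
          rw [← h1] at h2; norm_num at h2
        · have h3 := hk v
          rw [if_pos rfl] at h3
          rw [if_neg hva] at h1
          rw [← h1] at h3; norm_num at h3
  -- the eliminated block is positive definite, with entrywise-nonnegative inverse
  have hoff : ∀ i j : {v : V // v ∉ (A ∪ B)}, i ≠ j →
      (Matrix.of fun i j : {v : V // v ∉ (A ∪ B)} => lapl c i.1 j.1) i j ≤ 0 := by
    intro i j hij
    have hne : i.1 ≠ j.1 := fun h => hij (Subtype.ext h)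
    show lapl c i.1 j.1 ≤ 0
    simp only [lapl, if_neg hne]
    exact neg_nonpos.2 (hnonneg _ _)
  -- key entrywise bound on the Schur complement
  have hschur : ∀ i j : ↥(A ∪ B), i.1 ≠ j.1 →
      c i.1 j.1 ≤ -(schur (lapl c) (A ∪ B) i j) := by
    intro i j hij
    have hL : lapl c i.1 j.1 = -(c i.1 j.1) := by simp [lapl, if_neg hij]
    have hle : schur (lapl c) (A ∪ B) i j ≤ -(c i.1 j.1) := by
      simp only [schur, Matrix.sub_apply, Matrix.of_apply]
      rw [hL]
      refine sub_le_self _ ?_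
      refine @schur_prod_nonneg _ _ _ _ _ _ _ ?_ ?_ ?_ i j
      · intro i' k
        show lapl c i'.1 k.1 ≤ 0
        have : i'.1 ≠ k.1 := fun h => k.2 (h ▸ i'.2)
        simp only [lapl, if_neg this]
        exact neg_nonpos.2 (hnonneg _ _)
      · intro k l
        exact inv_nonneg_of_posdef _
          (lcc_posdef c hsymm hnonneg hdiag hconn (A ∪ B) ⟨a, Or.inl ha⟩) hoff k l
      · intro k j'
        show lapl c k.1 j'.1 ≤ 0
        have : k.1 ≠ j'.1 := fun h => k.2 (h ▸ j'.2)
        simp only [lapl, if_neg this]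
        exact neg_nonpos.2 (hnonneg _ _)
    linarith
  -- volumes minus cuts equal internal edge weight
  have hvol_split : ∀ (X : Set V), (∑ v : V, if v ∈ X then wdeg c v else 0)
      = (∑ u : V, ∑ v : V, if u ∈ X ∧ v ∈ X then c u v else 0)
        + (∑ u : V, ∑ v : V, if u ∈ X ∧ v ∉ X then c u v else 0) := by
    intro X
    rw [← Finset.sum_add_distrib]
    refine Finset.sum_congr rfl fun u _ => ?_
    rw [← Finset.sum_add_distrib]
    by_cases h : u ∈ X
    · rw [if_pos h]
      show wdeg c u = _
      rw [wdeg]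
      refine Finset.sum_congr rfl fun v _ => ?_
      by_cases hv : v ∈ X <;> simp [h, hv]
    · rw [if_neg h]
      exact (Finset.sum_eq_zero fun v _ => by simp [h]).symm
  -- internal sums transfer to the Schur complement index type
  have hsub : ∀ (f : V → V → ℝ), (∀ u v, u ∉ A ∪ B → f u v = 0) →
      (∀ u v, v ∉ A ∪ B → f u v = 0) →
      ∑ u : V, ∑ v : V, f u v = ∑ i : ↥(A ∪ B), ∑ j : ↥(A ∪ B), f i.1 j.1 := by
    intro f hf1 hf2
    rw [← sum_subtype_pred (fun v => v ∈ A ∪ B) (fun u => ∑ v : V, f u v)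
      (fun u hu => Finset.sum_eq_zero fun v _ => hf1 u v hu)]
    refine sum_fintype_congr _ _ fun i => ?_
    rw [← sum_subtype_pred (fun v => v ∈ A ∪ B) (fun v => f i.1 v)
      (fun v hv => hf2 i.1 v hv)]
    exact sum_fintype_congr _ _ fun j => rfl
  have hTA : volGA - cutA = ∑ i : ↥(A ∪ B), ∑ j : ↥(A ∪ B),
      if i.1 ∈ A ∧ j.1 ∈ A then c i.1 j.1 else 0 := by
    rw [hvolGA, hcutA, hvol_split A,
      hsub (fun u v => if u ∈ A ∧ v ∈ A then c u v else 0)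
        (fun u v hu => if_neg fun h => hu (Or.inl h.1))
        (fun u v hv => if_neg fun h => hv (Or.inl h.2))]
    ring
  have hTB : volGB - cutB = ∑ i : ↥(A ∪ B), ∑ j : ↥(A ∪ B),
      if i.1 ∈ B ∧ j.1 ∈ B then c i.1 j.1 else 0 := by
    rw [hvolGB, hcutB, hvol_split B,
      hsub (fun u v => if u ∈ B ∧ v ∈ B then c u v else 0)
        (fun u v hu => if_neg fun h => hu (Or.inr h.1))
        (fun u v hv => if_neg fun h => hv (Or.inr h.2))]
    ring
  -- lower bounds on the Schur volumes
  have hIA_ge : ∀ (X : Set V), (X = A ∨ X = B) →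
      (∑ i : ↥(A ∪ B), ∑ j : ↥(A ∪ B), if i.1 ∈ X ∧ j.1 ∈ X then c i.1 j.1 else 0)
      ≤ ∑ i : ↥(A ∪ B), if i.1 ∈ X then
          (∑ j : ↥(A ∪ B), if j ≠ i then -(schur (lapl c) (A ∪ B) i j) else 0) else 0 := by
    intro X _
    refine Finset.sum_le_sum fun i _ => ?_
    by_cases hiX : i.1 ∈ X
    · rw [if_pos hiX]
      refine Finset.sum_le_sum fun j _ => ?_
      by_cases hji : j = i
      · subst hji
        simp [hdiag]
      · rw [if_pos hji]
        have hne : i.1 ≠ j.1 := fun h => hji (Subtype.ext h.symm)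
        have h1 := hschur i j hne
        have h2 := hnonneg i.1 j.1
        by_cases hjX : j.1 ∈ X
        · rw [if_pos ⟨hiX, hjX⟩]; exact h1
        · rw [if_neg fun h => hjX h.2]; linarith
    · rw [if_neg hiX]
      exact le_of_eq (Finset.sum_eq_zero fun j _ => if_neg fun h => hiX h.1)
  -- cut bounds from the conductance hypotheses
  have hvolGA_pos : 0 < volGA := by
    rw [hvolGA]
    refine Finset.sum_pos' (fun v _ => by split <;> [exact (hwnn v); exact le_refl 0])
      ⟨a, Finset.mem_univ a, by rw [if_pos ha]; exact hwpos a⟩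
  have hvolGB_pos : 0 < volGB := by
    rw [hvolGB]
    refine Finset.sum_pos' (fun v _ => by split <;> [exact (hwnn v); exact le_refl 0])
      ⟨b, Finset.mem_univ b, by rw [if_pos hb]; exact hwpos b⟩
  have hrestA_pos : 0 < ∑ v : V, if v ∉ A then wdeg c v else 0 := by
    refine Finset.sum_pos' (fun v _ => by split <;> [exact (hwnn v); exact le_refl 0])
      ⟨b, Finset.mem_univ b, by rw [if_pos hbA]; exact hwpos b⟩
  have hrestB_pos : 0 < ∑ v : V, if v ∉ B then wdeg c v else 0 := by
    refine Finset.sum_pos' (fun v _ => by split <;> [exact (hwnn v); exact le_refl 0])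
      ⟨a, Finset.mem_univ a, by rw [if_pos haB]; exact hwpos a⟩
  have hcutA_le : cutA ≤ volGA / 4 := by
    have hmin : 0 < min volGA (∑ v : V, if v ∉ A then wdeg c v else 0) :=
      lt_min hvolGA_pos hrestA_pos
    have h1 := (div_le_iff₀ hmin).1 hphiA
    have h2 := min_le_left volGA (∑ v : V, if v ∉ A then wdeg c v else 0)
    linarith
  have hcutB_le : cutB ≤ volGB / 4 := by
    have hmin : 0 < min volGB (∑ v : V, if v ∉ B then wdeg c v else 0) :=
      lt_min hvolGB_pos hrestB_pos
    have h1 := (div_le_iff₀ hmin).1 hphiB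
    have h2 := min_le_left volGB (∑ v : V, if v ∉ B then wdeg c v else 0)
    linarith
  -- the Schur volume lower bounds
  have h34A : 3 / 4 * volGA ≤ volIA := by
    have := hIA_ge A (Or.inl rfl)
    rw [← hTA, ← hvolIA] at this
    linarith
  have h34B : 3 / 4 * volGB ≤ volIB := by
    have := hIA_ge B (Or.inr rfl)
    rw [← hTB, ← hvolIB] at this
    linarith
  -- nonnegativity of the Schur cut
  have hcI0 : 0 ≤ cI := by
    rw [hcI]
    refine Finset.sum_nonneg fun i _ => Finset.sum_nonneg fun j _ => ?_
    by_cases h : i.1 ∈ A ∧ j.1 ∈ B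
    · rw [if_pos h]
      have hne : i.1 ≠ j.1 := fun he => (Set.disjoint_left.1 hd h.1) (he ▸ h.2)
      exact le_trans (hnonneg i.1 j.1) (hschur i j hne)
    · rw [if_neg h]
  -- final arithmetic
  have hminG : 0 < min volGA volGB := lt_min hvolGA_pos hvolGB_pos
  have hminI : 3 / 4 * min volGA volGB ≤ min volIA volIB := by
    refine le_min ?_ ?_
    · have := min_le_left volGA volGB; linarith
    · have := min_le_right volGA volGB; linarith
  have hminIpos : 0 < min volIA volIB := by linarith
  have hx0 : 0 ≤ cI / min volGA volGB := div_nonneg hcI0 hminG.le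
  refine ⟨?_, ?_, h34A, h34B⟩
  · have h1 : cI / min volIA volIB ≤ cI / (3 / 4 * min volGA volGB) := by
      exact div_le_div_of_nonneg_left hcI0 (by linarith) hminI
    have h2 : cI / (3 / 4 * min volGA volGB) = 4 / 3 * (cI / min volGA volGB) := by
      field_simp
    linarith
  · nlinarith [hsigma, hx0]
end
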